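/- arXiv:1210.2803 — 2 statements merged into one kernel-verified Lean document; each statement's English description precedes it below -/
import Mathlib

section
/- For a based 2-covering map p : (G,v) → (H,w), the induced homomorphism p_* : π₁²(G,v) → π₁²(H,w) on 2-fundamental groups is injective. Moreover, a class [φ] ∈ π₁²(H,w) lies in the image of p_* if and only if the lift of φ starting at v is a loop at v. -/
/-- A path of length `len` in a graph with edge relation `E`, from `v` to `w`:
a graph homomorphism `L_len → G`. Values of `toFun` beyond `len` are irrelevant. -/
structure GPath {V : Type*} (E : V → V → Prop) (v w : V) where
  len : ℕ
  toFun : ℕ → V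
  src : toFun 0 = v
  tgt : toFun len = w
  adj : ∀ i < len, E (toFun i) (toFun (i + 1))

/-- Generating relation of 2-homotopy of paths: (i) insertion of a back-and-forth step,
or (ii) equal lengths with `φ × ψ` sending edges of `L_n` to edges of `G`. -/
def HtpyStep {V : Type*} (E : V → V → Prop) {v w : V} (φ ψ : GPath E v w) : Prop :=
  (φ.len + 2 = ψ.len ∧ ∃ x ≤ φ.len,
      (∀ i ≤ x, φ.toFun i = ψ.toFun i) ∧ ∀ i, x ≤ i → i ≤ φ.len → φ.toFun i = ψ.toFun (i + 2)) ∨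
  (φ.len = ψ.len ∧ ∀ i < φ.len,
      E (φ.toFun i) (ψ.toFun (i + 1)) ∧ E (φ.toFun (i + 1)) (ψ.toFun i))

/-- 2-homotopy of paths: the equivalence relation generated by `HtpyStep`. -/
def Htpy {V : Type*} (E : V → V → Prop) {v w : V} : GPath E v w → GPath E v w → Prop :=
  Relation.EqvGen (HtpyStep E)

/-- Concatenation of paths: `ψ` first (from `u` to `v`), then `φ` (from `v` to `w`). -/
def GPath.comp {V : Type*} {E : V → V → Prop} {u v w : V}
    (φ : GPath E v w) (ψ : GPath E u v) : GPath E u w where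
  len := ψ.len + φ.len
  toFun := fun i => if i < ψ.len then ψ.toFun i else φ.toFun (i - ψ.len)
  src := by
    by_cases h : 0 < ψ.len
    · simpa [h] using ψ.src
    · have h0 : ψ.len = 0 := by omega
      have h1 : u = v := by
        have ht := ψ.tgt
        rw [h0] at ht
        rw [← ψ.src]
        exact ht
      simp [h, h0, φ.src, h1]
  tgt := by
    have h : ¬ (ψ.len + φ.len < ψ.len) := by omega
    simp [h, φ.tgt]
  adj := by
    intro i hi
    by_cases h1 : i + 1 < ψ.len
    · have h0 : i < ψ.len := by omega
      simpa [h0, h1] using ψ.adj i h0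
    · by_cases h0 : i < ψ.len
      · have he : i + 1 = ψ.len := by omega
        have : φ.toFun (i + 1 - ψ.len) = ψ.toFun (i + 1) := by
          rw [he, Nat.sub_self, φ.src, ψ.tgt]
        simp only [h0, h1, if_pos, if_neg, not_false_iff]
        rw [this]
        exact ψ.adj i h0
      · have hh : ¬ (i + 1 < ψ.len) := h1
        have hs : i + 1 - ψ.len = (i - ψ.len) + 1 := by omega
        simp only [h0, hh, if_neg, not_false_iff]
        rw [hs]
        exact φ.adj (i - ψ.len) (by omega)

/-- The image of a path under a graph homomorphism. -/
def GPath.map {V W : Type*} {E : V → V → Prop} {F : W → W → Prop} {v w : V}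
    (p : V → W) (hp : ∀ x y, E x y → F (p x) (p y)) (φ : GPath E v w) :
    GPath F (p v) (p w) where
  len := φ.len
  toFun := fun i => p (φ.toFun i)
  src := by simp [φ.src]
  tgt := by simp [φ.tgt]
  adj := fun i hi => hp _ _ (φ.adj i hi)

/-- The constant path of length 0. -/
def GPath.const {V : Type*} (E : V → V → Prop) (v : V) : GPath E v v :=
  ⟨0, fun _ => v, rfl, rfl, fun i h => absurd h (Nat.not_lt_zero i)⟩

/-- The neighborhood `N(v)` of a vertex in a graph given by its edge relation. -/
def Nbhd {V : Type*} (E : V → V → Prop) (v : V) : Set V := {w | E v w}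

/-- The second neighborhood `N₂(v) = N(N(v))`. -/
def Nbhd2 {V : Type*} (E : V → V → Prop) (v : V) : Set V := {w | ∃ u, E v u ∧ E u w}

/-- A graph homomorphism between graphs given by edge relations. -/
def IsGraphHom {V W : Type*} (E : V → V → Prop) (F : W → W → Prop) (p : V → W) : Prop :=
  ∀ x y, E x y → F (p x) (p y)

/-- A 2-covering map: a graph homomorphism restricting to bijections
`N(v) → N(p v)` and `N₂(v) → N₂(p v)` for every vertex `v`. -/
def IsTwoCovering {V W : Type*} (E : V → V → Prop) (F : W → W → Prop) (p : V → W) : Prop :=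
  IsGraphHom E F p ∧
    ∀ v, Set.BijOn p (Nbhd E v) (Nbhd F (p v)) ∧ Set.BijOn p (Nbhd2 E v) (Nbhd2 F (p v))

/-! A 2-covering has unique path lifting, and lifting turns every elementary 2-homotopy of paths
in `H` into one of the same kind in `G` between the lifts, which end at the same vertex. A
back-and-forth step lifts to a back-and-forth step because `p` is injective on second
neighbourhoods; cross-adjacent paths lift to cross-adjacent paths because a 4-cycle of `H`
whose three other edges have been lifted closes up in `G`. Hence 2-homotopic paths have
2-homotopic lifts with a common endpoint. A loop of `G` is the lift of its image, which gives
injectivity, and the lift of `φ` ends at `v` exactly when `φ` is homotopic to the image of a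
loop. -/

theorem htpy_of_eqOn {V : Type*} {E : V → V → Prop} (hE : ∀ x y, E x y → E y x) {v w : V}
    {φ ψ : GPath E v w} (hlen : φ.len = ψ.len) (h : ∀ i ≤ φ.len, φ.toFun i = ψ.toFun i) :
    Htpy E φ ψ := by
  refine .rel _ _ (Or.inr ⟨hlen, fun i hi => ⟨?_, ?_⟩⟩)
  · rw [← h (i + 1) hi]
    exact φ.adj i hi
  · rw [← h i hi.le]
    exact hE _ _ (φ.adj i hi)

section TwoCovering

variable {VG VH : Type*} {E : VG → VG → Prop} {F : VH → VH → Prop} {p : VG → VH}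

structure IsPathLift (E : VG → VG → Prop) (p : VG → VH) (f : ℕ → VH) (n : ℕ) (g : ℕ → VG) :
    Prop where
  map_eq : ∀ i ≤ n, p (g i) = f i
  adj : ∀ i < n, E (g i) (g (i + 1))

theorem IsPathLift.mono {f : ℕ → VH} {g : ℕ → VG} {m n : ℕ} (h : IsPathLift E p f n g)
    (hmn : m ≤ n) : IsPathLift E p f m g :=
  ⟨fun i hi => h.map_eq i (hi.trans hmn), fun i hi => h.adj i (hi.trans_le hmn)⟩

def GPath.Lifts {v₀ u : VG} {w w' : VH} (p : VG → VH) (Φ : GPath E v₀ u) (a : GPath F w w') :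
    Prop :=
  Φ.len = a.len ∧ ∀ i ≤ a.len, p (Φ.toFun i) = a.toFun i

section Lifts

variable {v₀ u : VG} {w w' : VH} {Φ : GPath E v₀ u} {a : GPath F w w'}

theorem GPath.Lifts.isPathLift (h : Φ.Lifts p a) : IsPathLift E p a.toFun a.len Φ.toFun :=
  ⟨h.2, h.1 ▸ Φ.adj⟩

theorem GPath.Lifts.map_src (h : Φ.Lifts p a) : p v₀ = w := by
  rw [← Φ.src, ← a.src]
  exact h.2 0 (Nat.zero_le _)

theorem GPath.lifts_map (hp : ∀ x y, E x y → F (p x) (p y)) (Φ : GPath E v₀ u) :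
    Φ.Lifts p (Φ.map p hp) :=
  ⟨rfl, fun _ _ => rfl⟩

end Lifts

namespace IsTwoCovering

theorem exists_adj_map_eq (hp : IsTwoCovering E F p) {a : VG} {b : VH} (h : F (p a) b) :
    ∃ u, E a u ∧ p u = b :=
  (hp.2 a).1.surjOn h

theorem eq_of_adj_of_adj (hp : IsTwoCovering E F p) {a b c : VG} (hb : E a b) (hc : E a c)
    (h : p b = p c) : b = c :=
  (hp.2 a).1.injOn hb hc h

theorem eq_of_backtrack (hp : IsTwoCovering E F p) (hE : ∀ x y, E x y → E y x) {a b c : VG}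
    (hab : E a b) (hbc : E b c) (h : p c = p a) : c = a :=
  (hp.2 a).2.injOn ⟨b, hab, hbc⟩ ⟨b, hab, hE _ _ hab⟩ h

theorem adj_of_square (hp : IsTwoCovering E F p) {a b c d : VG} (hab : E a b) (hac : E a c)
    (hcd : E c d) (hbd : F (p b) (p d)) : E b d := by
  obtain ⟨u, hbu, hu⟩ := hp.exists_adj_map_eq hbd
  rwa [(hp.2 a).2.injOn ⟨b, hab, hbu⟩ ⟨c, hac, hcd⟩ hu] at hbu

theorem exists_pathLift (hp : IsTwoCovering E F p) {f : ℕ → VH} {v₀ : VG} (hv : p v₀ = f 0) :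
    ∀ n, (∀ i < n, F (f i) (f (i + 1))) → ∃ g, g 0 = v₀ ∧ IsPathLift E p f n g
  | 0, _ => ⟨fun _ => v₀, rfl, fun i hi => by rwa [Nat.le_zero.mp hi], fun _ hi => by omega⟩
  | n + 1, hf => by
    obtain ⟨g, hg0, hg⟩ := hp.exists_pathLift hv n fun i hi => hf i (by omega)
    obtain ⟨u, hu, hpu⟩ := hp.exists_adj_map_eq (a := g n) (b := f (n + 1))
      (by rw [hg.map_eq n le_rfl]; exact hf n (by omega))
    refine ⟨fun i => if i ≤ n then g i else u, by simpa using hg0, fun i hi => ?_, fun i hi => ?_⟩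
    · by_cases hin : i ≤ n
      · simpa [hin] using hg.map_eq i hin
      · simpa [hin, show i = n + 1 by omega] using hpu
    · by_cases hin : i + 1 ≤ n
      · simpa [hin, show i ≤ n by omega] using hg.adj i hin
      · simpa [hin, show i = n by omega] using hu

theorem lift_unique (hp : IsTwoCovering E F p) {f : ℕ → VH} {n : ℕ} {g g' : ℕ → VG}
    (hg : IsPathLift E p f n g) (hg' : IsPathLift E p f n g') (h0 : g 0 = g' 0) :
    ∀ i ≤ n, g i = g' i := by
  intro i hi
  induction i with
  | zero => exact h0
  | succ i ih =>
    refine hp.eq_of_adj_of_adj (hg.adj i hi) ?_ ((hg.map_eq _ hi).trans (hg'.map_eq _ hi).symm)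
    rw [ih (by omega)]
    exact hg'.adj i hi

theorem backtrack_lift (hp : IsTwoCovering E F p) (hE : ∀ x y, E x y → E y x) {f₁ f₂ : ℕ → VH}
    {g₁ g₂ : ℕ → VG} {n x : ℕ} (hx : x ≤ n) (hpre : ∀ i ≤ x, f₁ i = f₂ i)
    (hsuf : ∀ i, x ≤ i → i ≤ n → f₁ i = f₂ (i + 2)) (hg₁ : IsPathLift E p f₁ n g₁)
    (hg₂ : IsPathLift E p f₂ (n + 2) g₂) (h0 : g₁ 0 = g₂ 0) :
    (∀ i ≤ x, g₁ i = g₂ i) ∧ ∀ i, x ≤ i → i ≤ n → g₁ i = g₂ (i + 2) := by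
  have hpre' : ∀ i ≤ x, g₁ i = g₂ i := hp.lift_unique (hg₁.mono hx)
    ⟨fun i hi => (hg₂.map_eq i (by omega)).trans (hpre i hi).symm,
      fun i hi => hg₂.adj i (by omega)⟩ h0
  have hback : g₂ (x + 2) = g₂ x := by
    refine hp.eq_of_backtrack hE (hg₂.adj x (by omega)) (hg₂.adj (x + 1) (by omega)) ?_
    rw [hg₂.map_eq _ (by omega), hg₂.map_eq _ (by omega), ← hsuf x le_rfl hx, hpre x le_rfl]
  refine ⟨hpre', fun i hxi hin => ?_⟩
  induction i, hxi using Nat.le_induction with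
  | base => rw [hback, hpre' x le_rfl]
  | succ i hxi ih =>
    refine hp.eq_of_adj_of_adj (hg₁.adj i (by omega)) ?_
      ((hg₁.map_eq _ hin).trans ((hsuf _ (by omega) hin).trans (hg₂.map_eq _ (by omega)).symm))
    rw [ih (by omega)]
    exact hg₂.adj (i + 2) (by omega)

theorem cross_lift (hp : IsTwoCovering E F p) (hE : ∀ x y, E x y → E y x)
    (hF : ∀ x y, F x y → F y x) {f₁ f₂ : ℕ → VH} {g₁ g₂ : ℕ → VG} {n : ℕ}
    (hf : ∀ i < n, F (f₁ i) (f₂ (i + 1)) ∧ F (f₁ (i + 1)) (f₂ i))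
    (hg₁ : IsPathLift E p f₁ n g₁) (hg₂ : IsPathLift E p f₂ n g₂) (h0 : g₁ 0 = g₂ 0) :
    ∀ i < n, E (g₁ i) (g₂ (i + 1)) ∧ E (g₁ (i + 1)) (g₂ i) := by
  intro i hi
  induction i with
  | zero =>
    constructor
    · rw [h0]; exact hg₂.adj 0 hi
    · rw [← h0]; exact hE _ _ (hg₁.adj 0 hi)
  | succ i ih =>
    obtain ⟨hdiag, hanti⟩ := ih (by omega)
    constructor
    · refine hp.adj_of_square (hg₁.adj i (by omega)) hdiag (hg₂.adj (i + 1) hi) ?_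
      rw [hg₁.map_eq _ (by omega), hg₂.map_eq _ (by omega)]
      exact (hf _ hi).1
    · refine hE _ _ (hp.adj_of_square (hg₂.adj i (by omega)) (hE _ _ hanti) (hg₁.adj (i + 1) hi) ?_)
      rw [hg₁.map_eq _ (by omega), hg₂.map_eq _ (by omega)]
      exact hF _ _ (hf _ hi).2

theorem cross_lift_last (hp : IsTwoCovering E F p) (hE : ∀ x y, E x y → E y x)
    (hF : ∀ x y, F x y → F y x) {f₁ f₂ : ℕ → VH} {g₁ g₂ : ℕ → VG} {n : ℕ}
    (hf : ∀ i < n, F (f₁ i) (f₂ (i + 1)) ∧ F (f₁ (i + 1)) (f₂ i)) (hn : f₁ n = f₂ n)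
    (hg₁ : IsPathLift E p f₁ n g₁) (hg₂ : IsPathLift E p f₂ n g₂) (h0 : g₁ 0 = g₂ 0) :
    g₁ n = g₂ n := by
  cases n with
  | zero => exact h0
  | succ m =>
    refine hp.eq_of_adj_of_adj (hg₁.adj m (by omega))
      (hp.cross_lift hE hF hf hg₁ hg₂ h0 m (by omega)).1 ?_
    rw [hg₁.map_eq _ le_rfl, hg₂.map_eq _ le_rfl, hn]

section Lifts

variable {v₀ u u' : VG} {w w' : VH}

theorem exists_lifts (hp : IsTwoCovering E F p) (a : GPath F w w') (hv : p v₀ = w) :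
    ∃ u, ∃ Φ : GPath E v₀ u, Φ.Lifts p a := by
  obtain ⟨g, hg0, hg⟩ := hp.exists_pathLift (hv.trans a.src.symm) a.len a.adj
  exact ⟨_, ⟨a.len, g, hg0, rfl, hg.adj⟩, rfl, hg.map_eq⟩

theorem lifts_eqOn (hp : IsTwoCovering E F p) {a : GPath F w w'} {Φ : GPath E v₀ u}
    {Ψ : GPath E v₀ u'} (hΦ : Φ.Lifts p a) (hΨ : Ψ.Lifts p a) :
    ∀ i ≤ a.len, Φ.toFun i = Ψ.toFun i :=
  hp.lift_unique hΦ.isPathLift hΨ.isPathLift (Φ.src.trans Ψ.src.symm)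

theorem lifts_tgt_eq (hp : IsTwoCovering E F p) {a : GPath F w w'} {Φ : GPath E v₀ u}
    {Ψ : GPath E v₀ u'} (hΦ : Φ.Lifts p a) (hΨ : Ψ.Lifts p a) : u = u' := by
  rw [← Φ.tgt, ← Ψ.tgt, hΦ.1, hΨ.1]
  exact hp.lifts_eqOn hΦ hΨ _ le_rfl

theorem htpyStep_lift_tgt_eq (hp : IsTwoCovering E F p) (hE : ∀ x y, E x y → E y x)
    (hF : ∀ x y, F x y → F y x) {a b : GPath F w w'} (hab : HtpyStep F a b)
    {Φ : GPath E v₀ u} {Ψ : GPath E v₀ u'} (hΦ : Φ.Lifts p a) (hΨ : Ψ.Lifts p b) : u = u' := by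
  have h0 : Φ.toFun 0 = Ψ.toFun 0 := Φ.src.trans Ψ.src.symm
  rw [← Φ.tgt, ← Ψ.tgt, hΦ.1, hΨ.1]
  rcases hab with ⟨hlen, x, hx, hpre, hsuf⟩ | ⟨hlen, hcross⟩
  · rw [← hlen]
    exact (hp.backtrack_lift hE hx hpre hsuf hΦ.isPathLift (hlen ▸ hΨ.isPathLift) h0).2 _ hx le_rfl
  · rw [← hlen]
    exact hp.cross_lift_last hE hF hcross (by rw [a.tgt, hlen, b.tgt]) hΦ.isPathLift
      (hlen ▸ hΨ.isPathLift) h0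

theorem htpyStep_lift (hp : IsTwoCovering E F p) (hE : ∀ x y, E x y → E y x)
    (hF : ∀ x y, F x y → F y x) {a b : GPath F w w'} (hab : HtpyStep F a b)
    {Φ Ψ : GPath E v₀ u} (hΦ : Φ.Lifts p a) (hΨ : Ψ.Lifts p b) : HtpyStep E Φ Ψ := by
  have h0 : Φ.toFun 0 = Ψ.toFun 0 := Φ.src.trans Ψ.src.symm
  rcases hab with ⟨hlen, x, hx, hpre, hsuf⟩ | ⟨hlen, hcross⟩
  · left
    rw [hΦ.1, hΨ.1]
    exact ⟨hlen, x, hx,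
      hp.backtrack_lift hE hx hpre hsuf hΦ.isPathLift (hlen ▸ hΨ.isPathLift) h0⟩
  · right
    rw [hΦ.1, hΨ.1]
    exact ⟨hlen, hp.cross_lift hE hF hcross hΦ.isPathLift (hlen ▸ hΨ.isPathLift) h0⟩

theorem htpy_lift_tgt_eq (hp : IsTwoCovering E F p) (hE : ∀ x y, E x y → E y x)
    (hF : ∀ x y, F x y → F y x) {a b : GPath F w w'} (hab : Htpy F a b) :
    ∀ {u u'} {Φ : GPath E v₀ u} {Ψ : GPath E v₀ u'}, Φ.Lifts p a → Ψ.Lifts p b → u = u' := by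
  induction hab with
  | rel a b hab => exact hp.htpyStep_lift_tgt_eq hE hF hab
  | refl a => exact hp.lifts_tgt_eq
  | symm a b _ ih => exact fun hΦ hΨ => (ih hΨ hΦ).symm
  | trans a b c _ _ ih₁ ih₂ =>
    intro u u' Φ Ψ hΦ hΨ
    obtain ⟨_, Ξ, hΞ⟩ := hp.exists_lifts b hΦ.map_src
    exact (ih₁ hΦ hΞ).trans (ih₂ hΞ hΨ)

theorem htpy_lift (hp : IsTwoCovering E F p) (hE : ∀ x y, E x y → E y x)
    (hF : ∀ x y, F x y → F y x) {a b : GPath F w w'} (hab : Htpy F a b) :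
    ∀ {Φ Ψ : GPath E v₀ u}, Φ.Lifts p a → Ψ.Lifts p b → Htpy E Φ Ψ := by
  induction hab with
  | rel a b hab => exact fun hΦ hΨ => .rel _ _ (hp.htpyStep_lift hE hF hab hΦ hΨ)
  | refl a =>
    exact fun hΦ hΨ => htpy_of_eqOn hE (hΦ.1.trans hΨ.1.symm)
      fun i hi => hp.lifts_eqOn hΦ hΨ i (hΦ.1 ▸ hi)
  | symm a b _ ih => exact fun hΦ hΨ => .symm _ _ (ih hΨ hΦ)
  | trans a b c hab _ ih₁ ih₂ =>
    intro Φ Ψ hΦ hΨ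
    obtain ⟨_, Ξ, hΞ⟩ := hp.exists_lifts b hΦ.map_src
    obtain rfl := hp.htpy_lift_tgt_eq hE hF hab hΦ hΞ
    exact .trans _ _ _ (ih₁ hΦ hΞ) (ih₂ hΞ hΨ)

end Lifts

end IsTwoCovering

end TwoCovering

/-- for a based 2-covering map `p : (G,v) → (H, p v)`, the induced map on
2-fundamental groups is injective, and a loop class of `H` at `p v` lies in the image
iff its lift starting at `v` is a loop at `v`. -/
theorem two_covering_pi2_injective {VG VH : Type*}
    (E : VG → VG → Prop) (F : VH → VH → Prop)
    (hEsymm : ∀ x y, E x y → E y x) (hFsymm : ∀ x y, F x y → F y x)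
    (p : VG → VH) (hp : IsTwoCovering E F p) (v : VG) :
    (∀ φ ψ : GPath E v v, Htpy F (φ.map p hp.1) (ψ.map p hp.1) → Htpy E φ ψ) ∧
      ∀ φ : GPath F (p v) (p v),
        (∃ ψ : GPath E v v, Htpy F (ψ.map p hp.1) φ) ↔
          ∀ g : ℕ → VG, g 0 = v → (∀ i ≤ φ.len, p (g i) = φ.toFun i) →
            (∀ i < φ.len, E (g i) (g (i + 1))) → g φ.len = v := by
  refine ⟨fun φ ψ h => hp.htpy_lift hEsymm hFsymm h (φ.lifts_map hp.1) (ψ.lifts_map hp.1),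
    fun φ => ⟨?_, fun hloop => ?_⟩⟩
  · rintro ⟨ψ, hψ⟩ g hg0 hgφ hgE
    exact (hp.htpy_lift_tgt_eq hEsymm hFsymm hψ (ψ.lifts_map hp.1)
      (Ψ := ⟨φ.len, g, hg0, rfl, hgE⟩) ⟨rfl, hgφ⟩).symm
  · obtain ⟨u, Φ, hΦ⟩ := hp.exists_lifts φ rfl
    have hu : u = v := by
      rw [← Φ.tgt, hΦ.1]
      exact hloop Φ.toFun Φ.src hΦ.2 hΦ.isPathLift.adj
    subst u
    exact ⟨Φ, htpy_of_eqOn hFsymm hΦ.1 fun i hi => hΦ.2 i (hΦ.1 ▸ hi)⟩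
end

section
/- For r = 3 or r ≥ 5, the 2-fundamental group π₁²(C_r, 0) of the cycle graph C_r is isomorphic to ℤ; in particular π₁²(K₃) ≅ ℤ. -/
/-- Edge relation of the cycle graph `C_m` on `ZMod m`. -/
def cycE (m : ℕ) (x y : ZMod m) : Prop := y = x + 1 ∨ x = y + 1


/-! Each step of a walk in `C_r` moves by `±1`; summing these signs lifts the walk to the
universal cover `ℤ` and gives an integer winding number. Since `2` and `4` are nonzero in
`ZMod r`, a closed walk of length 2 or 4 has winding number 0 (for `r = 4` the cycle itself is
such a square), so the winding number is invariant under both generating 2-homotopies.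
Conversely, erasing backtracks shortens any loop without changing its class or its winding
number, and a loop without backtracks runs monotonically `|k|` times around the cycle.
Hence a loop at `0` is classified by its winding number, which is `r` times an integer. -/

namespace GPath

variable {V : Type*} {E : V → V → Prop} {v w : V}

def NoBacktrack (φ : GPath E v w) : Prop :=
  ∀ i, i + 2 ≤ φ.len → φ.toFun (i + 2) ≠ φ.toFun i

def eraseBacktrack (φ : GPath E v w) {x : ℕ} (hx : x + 2 ≤ φ.len)
    (hb : φ.toFun (x + 2) = φ.toFun x) : GPath E v w where
  len := φ.len - 2
  toFun i := if i ≤ x then φ.toFun i else φ.toFun (i + 2)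
  src := by simp [φ.src]
  tgt := by
    split_ifs with h
    · rw [show φ.len - 2 = x by omega, ← hb, show x + 2 = φ.len by omega, φ.tgt]
    · rw [show φ.len - 2 + 2 = φ.len by omega, φ.tgt]
  adj i hi := by
    by_cases h1 : i + 1 ≤ x
    · rw [if_pos (by omega), if_pos h1]
      exact φ.adj i (by omega)
    · by_cases h0 : i ≤ x
      · rw [if_pos h0, if_neg h1, show i = x by omega, ← hb]
        exact φ.adj (x + 2) (by omega)
      · rw [if_neg h0, if_neg h1]
        exact φ.adj (i + 2) (by omega)

theorem htpyStep_eraseBacktrack (φ : GPath E v w) {x : ℕ} (hx : x + 2 ≤ φ.len)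
    (hb : φ.toFun (x + 2) = φ.toFun x) : HtpyStep E (φ.eraseBacktrack hx hb) φ := by
  refine Or.inl ⟨by simp only [eraseBacktrack]; omega, x, by simp only [eraseBacktrack]; omega,
    fun i hi => if_pos hi, fun i hxi _ => ?_⟩
  by_cases h : i ≤ x
  · show (if i ≤ x then φ.toFun i else φ.toFun (i + 2)) = φ.toFun (i + 2)
    rw [if_pos h, show i = x by omega, hb]
  · exact if_neg h

theorem htpyStep_of_eqOn (hE : ∀ x y, E x y → E y x) {φ ψ : GPath E v w}
    (hlen : φ.len = ψ.len) (h : ∀ i ≤ φ.len, φ.toFun i = ψ.toFun i) : HtpyStep E φ ψ :=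
  Or.inr ⟨hlen, fun i hi =>
    ⟨h (i + 1) hi ▸ φ.adj i hi, h i hi.le ▸ hE _ _ (φ.adj i hi)⟩⟩

end GPath

section CycleWinding

variable {r : ℕ}

theorem cycE_symm {x y : ZMod r} (h : cycE r x y) : cycE r y x := h.symm

/-- The sign of a step of `C_r`; on non-adjacent pairs it is a meaningless `-1`. -/
def stepSign (x y : ZMod r) : ℤ := if y = x + 1 then 1 else -1

theorem stepSign_eq_one_or_neg_one (x y : ZMod r) : stepSign x y = 1 ∨ stepSign x y = -1 := by
  unfold stepSign
  split_ifs <;> simp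

theorem eq_add_stepSign {x y : ZMod r} (h : cycE r x y) : y = x + stepSign x y := by
  unfold stepSign
  split_ifs with hy
  · simpa using hy
  · rcases h with h | h
    · exact absurd h hy
    · rw [h]
      push_cast
      ring

theorem stepSign_add_intCast (h2 : (2 : ZMod r) ≠ 0) (x : ZMod r) {s : ℤ}
    (hs : s = 1 ∨ s = -1) : stepSign x (x + s) = s := by
  rcases hs with rfl | rfl
  · simp [stepSign]
  · rw [stepSign, if_neg]
    intro h
    push_cast at h
    exact h2 (by linear_combination -h)

theorem stepSign_swap (h2 : (2 : ZMod r) ≠ 0) {x y : ZMod r} (h : cycE r x y) :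
    stepSign y x = -stepSign x y := by
  have hx : x = y + ((-stepSign x y : ℤ) : ZMod r) := by
    push_cast
    linear_combination -eq_add_stepSign h
  have hs : -stepSign x y = 1 ∨ -stepSign x y = -1 := by
    rcases stepSign_eq_one_or_neg_one x y with h | h <;> omega
  have := stepSign_add_intCast h2 y hs
  rwa [← hx] at this

theorem stepSign_eq_of_ne {x y z : ZMod r} (hxy : cycE r x y) (hyz : cycE r y z)
    (hzx : z ≠ x) : stepSign y z = stepSign x y := by
  by_contra hne
  have hopp : stepSign y z = -stepSign x y := by
    rcases stepSign_eq_one_or_neg_one x y with h | h <;>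
      rcases stepSign_eq_one_or_neg_one y z with h' | h' <;> omega
  have hopp' : (stepSign y z : ZMod r) = -stepSign x y := by
    rw [hopp]
    push_cast
    ring
  exact hzx (by linear_combination eq_add_stepSign hyz + eq_add_stepSign hxy + hopp')

/-- Two walks of length 2 with the same ends have the same sign sum: their difference is an
even integer of absolute value at most 4 that vanishes in `ZMod r`. -/
theorem stepSign_add_eq_of_square (h2 : (2 : ZMod r) ≠ 0) (h4 : (4 : ZMod r) ≠ 0)
    {x y y' z : ZMod r} (hxy : cycE r x y) (hyz : cycE r y z) (hxy' : cycE r x y')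
    (hy'z : cycE r y' z) :
    stepSign x y + stepSign y z = stepSign x y' + stepSign y' z := by
  set d := stepSign x y + stepSign y z - (stepSign x y' + stepSign y' z) with hd
  have hcast : (d : ZMod r) = 0 := by
    rw [hd]
    push_cast
    linear_combination eq_add_stepSign hxy' + eq_add_stepSign hy'z - eq_add_stepSign hxy -
      eq_add_stepSign hyz
  have hcases : d = 0 ∨ d = 2 ∨ d = -2 ∨ d = 4 ∨ d = -4 := by
    rcases stepSign_eq_one_or_neg_one x y with h | h <;>
      rcases stepSign_eq_one_or_neg_one y z with h' | h' <;>
      rcases stepSign_eq_one_or_neg_one x y' with h'' | h'' <;>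
      rcases stepSign_eq_one_or_neg_one y' z with h''' | h''' <;> omega
  rcases hcases with h | h | h | h | h <;> rw [h] at hcast <;> push_cast at hcast
  · omega
  · exact absurd hcast h2
  · exact absurd (neg_eq_zero.mp hcast) h2
  · exact absurd hcast h4
  · exact absurd (neg_eq_zero.mp hcast) h4

def partialWinding (f : ℕ → ZMod r) (n : ℕ) : ℤ :=
  ∑ i ∈ Finset.range n, stepSign (f i) (f (i + 1))

@[simp]
theorem partialWinding_zero (f : ℕ → ZMod r) : partialWinding f 0 = 0 :=
  Finset.sum_range_zero _

theorem partialWinding_succ (f : ℕ → ZMod r) (n : ℕ) :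
    partialWinding f (n + 1) = partialWinding f n + stepSign (f n) (f (n + 1)) :=
  Finset.sum_range_succ _ _

theorem partialWinding_add (f : ℕ → ZMod r) (m n : ℕ) :
    partialWinding f (m + n) = partialWinding f m + partialWinding (fun i => f (m + i)) n :=
  Finset.sum_range_add _ _ _

theorem partialWinding_congr {f g : ℕ → ZMod r} {n : ℕ} (h : ∀ i ≤ n, f i = g i) :
    partialWinding f n = partialWinding g n :=
  Finset.sum_congr rfl fun i hi => by
    rw [Finset.mem_range] at hi
    rw [h i hi.le, h (i + 1) hi]

theorem intCast_partialWinding {f : ℕ → ZMod r} {n : ℕ}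
    (h : ∀ i < n, cycE r (f i) (f (i + 1))) : (partialWinding f n : ZMod r) = f n - f 0 := by
  induction n with
  | zero => simp
  | succ n ih =>
    rw [partialWinding_succ, Int.cast_add, ih fun i hi => h i (by omega)]
    linear_combination -eq_add_stepSign (h n (by omega))

theorem partialWinding_eq_mul {f : ℕ → ZMod r} {n : ℕ} {s : ℤ}
    (h : ∀ i < n, stepSign (f i) (f (i + 1)) = s) : partialWinding f n = n * s := by
  rw [partialWinding, Finset.sum_congr rfl fun i hi => h i (Finset.mem_range.mp hi)]
  simp

namespace GPath

variable {u v w : ZMod r}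

def winding (φ : GPath (cycE r) v w) : ℤ :=
  partialWinding φ.toFun φ.len

theorem intCast_winding (φ : GPath (cycE r) v w) : (φ.winding : ZMod r) = w - v := by
  rw [winding, intCast_partialWinding φ.adj, φ.src, φ.tgt]

theorem natCast_dvd_winding (φ : GPath (cycE r) v v) : (r : ℤ) ∣ φ.winding :=
  (ZMod.intCast_zmod_eq_zero_iff_dvd _ _).mp (by rw [intCast_winding, sub_self])

theorem winding_comp (φ : GPath (cycE r) v w) (ψ : GPath (cycE r) u v) :
    (φ.comp ψ).winding = φ.winding + ψ.winding := by
  have hpre : ∀ i ≤ ψ.len, (φ.comp ψ).toFun i = ψ.toFun i := by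
    intro i hi
    show (if i < ψ.len then ψ.toFun i else φ.toFun (i - ψ.len)) = ψ.toFun i
    by_cases h : i < ψ.len
    · exact if_pos h
    · rw [if_neg h, show i = ψ.len by omega, Nat.sub_self, φ.src, ψ.tgt]
  have hsuf : (fun i => (φ.comp ψ).toFun (ψ.len + i)) = φ.toFun := by
    funext i
    show (if ψ.len + i < ψ.len then ψ.toFun (ψ.len + i) else φ.toFun (ψ.len + i - ψ.len)) = _
    rw [if_neg (by omega), Nat.add_sub_cancel_left]
  rw [winding, show (φ.comp ψ).len = ψ.len + φ.len from rfl, partialWinding_add,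
    partialWinding_congr hpre, hsuf, add_comm]
  rfl

theorem winding_eq_of_backtrack_insert (h2 : (2 : ZMod r) ≠ 0) {φ ψ : GPath (cycE r) v w}
    (hlen : φ.len + 2 = ψ.len) {x : ℕ} (hx : x ≤ φ.len)
    (hpre : ∀ i ≤ x, φ.toFun i = ψ.toFun i)
    (hsuf : ∀ i, x ≤ i → i ≤ φ.len → φ.toFun i = ψ.toFun (i + 2)) :
    φ.winding = ψ.winding := by
  have key : ∀ i, x ≤ i → i ≤ φ.len →
      partialWinding φ.toFun i = partialWinding ψ.toFun (i + 2) := by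
    intro i hxi
    induction i, hxi using Nat.le_induction with
    | base =>
      intro _
      have hback : ψ.toFun (x + 2) = ψ.toFun x := by rw [← hsuf x le_rfl hx, hpre x le_rfl]
      rw [partialWinding_congr hpre, partialWinding_succ, partialWinding_succ, hback,
        stepSign_swap h2 (ψ.adj x (by omega))]
      ring
    | succ i hxi ih =>
      intro hi
      rw [partialWinding_succ, ih (by omega), hsuf i hxi (by omega), hsuf (i + 1) (by omega) hi,
        show i + 1 + 2 = i + 2 + 1 by omega, partialWinding_succ ψ.toFun (i + 2)]
  rw [winding, winding, key φ.len hx le_rfl, hlen]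

/-- The lift of `ψ` is obtained from that of `φ` by one diagonal step `φ i → ψ (i + 1)`;
consecutive diagonals bound a square, so this persists along the whole path. -/
theorem winding_eq_of_diagonal_adj (h2 : (2 : ZMod r) ≠ 0) (h4 : (4 : ZMod r) ≠ 0)
    {φ ψ : GPath (cycE r) v w} (hlen : φ.len = ψ.len)
    (h : ∀ i < φ.len, cycE r (φ.toFun i) (ψ.toFun (i + 1))) : φ.winding = ψ.winding := by
  have key : ∀ i < φ.len, partialWinding ψ.toFun (i + 1) =
      partialWinding φ.toFun i + stepSign (φ.toFun i) (ψ.toFun (i + 1)) := by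
    intro i
    induction i with
    | zero => intro _; simp [partialWinding, φ.src, ψ.src]
    | succ i ih =>
      intro hi
      have hsq := stepSign_add_eq_of_square h2 h4 (h i (by omega)) (ψ.adj (i + 1) (by omega))
        (φ.adj i (by omega)) (h (i + 1) hi)
      rw [partialWinding_succ, ih (by omega), partialWinding_succ φ.toFun i]
      linarith
  rw [winding, winding, ← hlen]
  cases hl : φ.len with
  | zero => simp
  | succ n =>
    have hend : ψ.toFun (n + 1) = φ.toFun (n + 1) := by
      rw [← hl, φ.tgt, hlen, ψ.tgt]
    rw [key n (by omega), hend, partialWinding_succ]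

theorem winding_eq_of_htpyStep (h2 : (2 : ZMod r) ≠ 0) (h4 : (4 : ZMod r) ≠ 0)
    {φ ψ : GPath (cycE r) v w} (h : HtpyStep (cycE r) φ ψ) : φ.winding = ψ.winding := by
  rcases h with ⟨hlen, x, hx, hpre, hsuf⟩ | ⟨hlen, h⟩
  · exact winding_eq_of_backtrack_insert h2 hlen hx hpre hsuf
  · exact winding_eq_of_diagonal_adj h2 h4 hlen fun i hi => (h i hi).1

theorem winding_eraseBacktrack (h2 : (2 : ZMod r) ≠ 0) (φ : GPath (cycE r) v w) {x : ℕ}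
    (hx : x + 2 ≤ φ.len) (hb : φ.toFun (x + 2) = φ.toFun x) :
    (φ.eraseBacktrack hx hb).winding = φ.winding := by
  obtain ⟨hlen, y, hy, hpre, hsuf⟩ := (φ.htpyStep_eraseBacktrack hx hb).resolve_right
    fun ⟨hlen, _⟩ => by simp only [eraseBacktrack] at hlen; omega
  exact winding_eq_of_backtrack_insert h2 hlen hy hpre hsuf

end GPath

theorem Htpy.winding_eq (h2 : (2 : ZMod r) ≠ 0) (h4 : (4 : ZMod r) ≠ 0) {v w : ZMod r}
    {φ ψ : GPath (cycE r) v w} (h : Htpy (cycE r) φ ψ) : φ.winding = ψ.winding := by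
  induction h with
  | rel _ _ h => exact GPath.winding_eq_of_htpyStep h2 h4 h
  | refl => rfl
  | symm _ _ _ ih => exact ih.symm
  | trans _ _ _ _ _ ih₁ ih₂ => exact ih₁.trans ih₂

end CycleWinding

theorem Int.sign_eq_one_or_neg_one_of_ne_zero {k : ℤ} (hk : k ≠ 0) :
    k.sign = 1 ∨ k.sign = -1 := by
  rcases Int.sign_trichotomy k with h | h | h
  · exact Or.inl h
  · exact absurd (Int.sign_eq_zero_iff_zero.mp h) hk
  · exact Or.inr h

def cycleLoop (r : ℕ) (k : ℤ) : GPath (cycE r) (0 : ZMod r) 0 where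
  len := r * k.natAbs
  toFun i := ((k.sign * i : ℤ) : ZMod r)
  src := by simp
  tgt := by simp
  adj i hi := by
    have hk : k ≠ 0 := by
      rintro rfl
      simp at hi
    rcases Int.sign_eq_one_or_neg_one_of_ne_zero hk with h | h <;> rw [h] <;> push_cast
    · exact Or.inl (by ring)
    · exact Or.inr (by ring)

section CycleLoop

variable {r : ℕ}

theorem winding_cycleLoop (h2 : (2 : ZMod r) ≠ 0) (k : ℤ) :
    (cycleLoop r k).winding = r * k := by
  rw [GPath.winding, partialWinding_eq_mul (s := k.sign)]
  · show ((r * k.natAbs : ℕ) : ℤ) * k.sign = r * k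
    push_cast
    linear_combination (r : ℤ) * Int.sign_mul_abs k
  · intro i hi
    have hk : k ≠ 0 := by
      rintro rfl
      simp [cycleLoop] at hi
    have hnext : (cycleLoop r k).toFun (i + 1) = (cycleLoop r k).toFun i + k.sign := by
      simp only [cycleLoop]
      push_cast
      ring
    rw [hnext]
    exact stepSign_add_intCast h2 _ (Int.sign_eq_one_or_neg_one_of_ne_zero hk)

/-- A loop without backtracks steps in one direction throughout, so it agrees pointwise with
`cycleLoop`. -/
theorem htpy_cycleLoop_of_noBacktrack {k : ℤ} {φ : GPath (cycE r) (0 : ZMod r) 0}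
    (hφ : φ.NoBacktrack) (hk : φ.winding = r * k) : Htpy (cycE r) φ (cycleLoop r k) := by
  set s := stepSign (φ.toFun 0) (φ.toFun 1)
  have hstep : ∀ i < φ.len, stepSign (φ.toFun i) (φ.toFun (i + 1)) = s := by
    intro i
    induction i with
    | zero => intro _; rfl
    | succ i ih =>
      intro hi
      rw [stepSign_eq_of_ne (φ.adj i (by omega)) (φ.adj (i + 1) hi) (hφ i (by omega)),
        ih (by omega)]
  have hval : ∀ i ≤ φ.len, φ.toFun i = ((i * s : ℤ) : ZMod r) := by
    intro i hi
    rw [← partialWinding_eq_mul fun j hj => hstep j (by omega),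
      intCast_partialWinding fun j hj => φ.adj j (by omega), φ.src, sub_zero]
  have hwind : (φ.len : ℤ) * s = r * k := by
    rw [← hk]
    exact (partialWinding_eq_mul hstep).symm
  have hs : s.natAbs = 1 := by
    rcases stepSign_eq_one_or_neg_one (φ.toFun 0) (φ.toFun 1) with h | h <;> simp [s, h]
  have hlen : r * k.natAbs = φ.len := by
    simpa [Int.natAbs_mul, hs] using (congrArg Int.natAbs hwind).symm
  have hsign : k.sign = s ∨ φ.len = 0 := by
    have : (k.sign - s) * φ.len = 0 := by
      rw [← hlen] at hwind ⊢
      push_cast at hwind ⊢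
      linear_combination (r : ℤ) * Int.sign_mul_abs k - hwind
    rcases mul_eq_zero.mp this with h | h
    · exact Or.inl (by linarith)
    · exact Or.inr (by exact_mod_cast h)
  refine .rel _ _ (GPath.htpyStep_of_eqOn (fun _ _ => cycE_symm) hlen.symm fun i hi => ?_)
  rw [hval i hi]
  show _ = ((k.sign * i : ℤ) : ZMod r)
  rcases hsign with h | h
  · rw [h, mul_comm]
  · simp [show i = 0 by omega]

theorem htpy_cycleLoop (h2 : (2 : ZMod r) ≠ 0) {k : ℤ} (φ : GPath (cycE r) (0 : ZMod r) 0)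
    (hk : φ.winding = r * k) : Htpy (cycE r) φ (cycleLoop r k) := by
  induction hn : φ.len using Nat.strong_induction_on generalizing φ with
  | _ n ih =>
  by_cases hφ : φ.NoBacktrack
  · exact htpy_cycleLoop_of_noBacktrack hφ hk
  · obtain ⟨x, hx, hb⟩ : ∃ x, ∃ hx : x + 2 ≤ φ.len, φ.toFun (x + 2) = φ.toFun x := by
      simpa [GPath.NoBacktrack] using hφ
    have hshort : Htpy (cycE r) (φ.eraseBacktrack hx hb) (cycleLoop r k) :=
      ih _ (by simp only [GPath.eraseBacktrack]; omega) _
        (by rw [GPath.winding_eraseBacktrack h2, hk]) rfl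
    exact .trans _ _ _ (.symm _ _ (.rel _ _ (φ.htpyStep_eraseBacktrack hx hb))) hshort

end CycleLoop

/-- for r = 3 or r ≥ 5, `π₁²(C_r, 0) ≅ ℤ`: there is a bijection from
the set of 2-homotopy classes of loops at 0 to ℤ turning concatenation into addition. -/
theorem pi2_cycle (r : ℕ) (hr : r = 3 ∨ 5 ≤ r) :
    ∃ e : Quot (Htpy (cycE r) (v := (0 : ZMod r)) (w := 0)) ≃ ℤ,
      ∀ φ ψ : GPath (cycE r) (0 : ZMod r) 0,
        e (Quot.mk _ (φ.comp ψ)) = e (Quot.mk _ φ) + e (Quot.mk _ ψ) := by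
  have hr0 : (r : ℤ) ≠ 0 := by omega
  have hcast : ∀ n : ℕ, ¬r ∣ n → (n : ZMod r) ≠ 0 :=
    fun n => mt (ZMod.natCast_eq_zero_iff n r).mp
  have h2 : (2 : ZMod r) ≠ 0 := by
    exact_mod_cast hcast 2 fun h => by have := Nat.le_of_dvd two_pos h; omega
  have h4 : (4 : ZMod r) ≠ 0 := by
    exact_mod_cast hcast 4 fun h => by
      have := Nat.le_of_dvd four_pos h
      rcases hr with rfl | hr <;> omega
  let e : Quot (Htpy (cycE r) (v := (0 : ZMod r)) (w := 0)) ≃ ℤ :=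
    { toFun := Quot.lift (fun φ => φ.winding / r) fun _ _ h => by rw [h.winding_eq h2 h4]
      invFun := fun k => Quot.mk _ (cycleLoop r k)
      left_inv := by
        rintro ⟨φ⟩
        exact Quot.sound <| .symm _ _ <|
          htpy_cycleLoop h2 φ (Int.mul_ediv_cancel' φ.natCast_dvd_winding).symm
      right_inv := fun k => by
        show (cycleLoop r k).winding / r = k
        rw [winding_cycleLoop h2, Int.mul_ediv_cancel_left _ hr0] }
  refine ⟨e, fun φ ψ => ?_⟩
  show (φ.comp ψ).winding / r = φ.winding / r + ψ.winding / r
  rw [GPath.winding_comp, Int.add_ediv_of_dvd_left φ.natCast_dvd_winding]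
end
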